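/- Let x be a real obs × vars matrix whose columns are all nonzero, let y ∈ ℝ^obs, and let (a^k) be a sequence produced by iterating the SolveBak update with column choices j_k and step sizes da_k = ⟨x_{j_k}, y - x a^k⟩ / ⟨x_{j_k}, x_{j_k}⟩. Then for every K ≥ 0 the squared errors telescope: ‖y - x a^0‖² - ‖y - x a^K‖² = Σ_{k=0}^{K-1} da_k² · ‖x_{j_k}‖². -/

import Mathlib

open scoped RealInnerProductSpace BigOperators

/-- The `j`-th column of the matrix `x`, as a vector in Euclidean space. -/
def col {obs vars : ℕ} (x : Matrix (Fin obs) (Fin vars) ℝ) (j : Fin vars) :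
    EuclideanSpace ℝ (Fin obs) :=
  WithLp.toLp 2 (fun i => x i j)

/-- The residual `y - x a` of the linear system `x a = y`, as a vector in Euclidean space. -/
def resid {obs vars : ℕ} (x : Matrix (Fin obs) (Fin vars) ℝ)
    (y : Fin obs → ℝ) (a : Fin vars → ℝ) : EuclideanSpace ℝ (Fin obs) :=
  WithLp.toLp 2 (fun i => y i - x.mulVec a i)

/-!
Each SolveBak step is an exact line search along a column: `da = ⟪c, r⟫ / ⟪c, c⟫` makes the new
residual `r - da • c` orthogonal to `c`, so by Pythagoras the squared residual drops by exactly
`da² ‖c‖²`. Summing these drops telescopes.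
-/

theorem Function.update_add_eq_add_single {ι M : Type*} [DecidableEq ι] [AddZeroClass M]
    (a : ι → M) (j : ι) (d : M) : Function.update a j (a j + d) = a + Pi.single j d := by
  funext i
  rcases eq_or_ne i j with rfl | hij <;> simp [*]

theorem resid_update_add {obs vars : ℕ} (x : Matrix (Fin obs) (Fin vars) ℝ)
    (y : Fin obs → ℝ) (a : Fin vars → ℝ) (j : Fin vars) (d : ℝ) :
    resid x y (Function.update a j (a j + d)) = resid x y a - d • col x j := by
  ext i
  simp only [resid, col, Function.update_add_eq_add_single, Matrix.mulVec_add,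
    Matrix.mulVec_single, op_smul_eq_smul, Pi.add_apply, Pi.smul_apply, Matrix.col_apply,
    smul_eq_mul, PiLp.sub_apply, PiLp.smul_apply]
  ring

theorem inner_eq_inner_div_inner_self_mul_norm_sq {E : Type*} [NormedAddCommGroup E]
    [InnerProductSpace ℝ E] (c r : E) : ⟪c, r⟫ = ⟪c, r⟫ / ⟪c, c⟫ * ‖c‖ ^ 2 := by
  rcases eq_or_ne c 0 with rfl | hc
  · simp
  · rw [← real_inner_self_eq_norm_sq, div_mul_cancel₀ _ (inner_self_ne_zero.mpr hc)]

theorem norm_sq_sub_norm_sq_sub_inner_div_smul {E : Type*} [NormedAddCommGroup E]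
    [InnerProductSpace ℝ E] (c r : E) :
    ‖r‖ ^ 2 - ‖r - (⟪c, r⟫ / ⟪c, c⟫) • c‖ ^ 2 = (⟪c, r⟫ / ⟪c, c⟫) ^ 2 * ‖c‖ ^ 2 := by
  set d := ⟪c, r⟫ / ⟪c, c⟫
  have hcr : ⟪r, c⟫ = d * ‖c‖ ^ 2 := by
    rw [real_inner_comm]; exact inner_eq_inner_div_inner_self_mul_norm_sq c r
  rw [norm_sub_sq_real, real_inner_smul_right, hcr, norm_smul, mul_pow, Real.norm_eq_abs, sq_abs]
  ring

theorem solvebak_residuals_telescope_general (obs vars : ℕ)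
    (x : Matrix (Fin obs) (Fin vars) ℝ)
    (y : Fin obs → ℝ)
    (a : ℕ → Fin vars → ℝ) (jseq : ℕ → Fin vars) (da : ℕ → ℝ)
    (hda : ∀ k, da k =
      ⟪col x (jseq k), resid x y (a k)⟫ / ⟪col x (jseq k), col x (jseq k)⟫)
    (hstep : ∀ k, a (k + 1) = Function.update (a k) (jseq k) (a k (jseq k) + da k)) :
    ∀ K : ℕ, ‖resid x y (a 0)‖ ^ 2 - ‖resid x y (a K)‖ ^ 2 =
      ∑ k ∈ Finset.range K, da k ^ 2 * ‖col x (jseq k)‖ ^ 2 := by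
  intro K
  rw [← Finset.sum_range_sub' (fun k => ‖resid x y (a k)‖ ^ 2)]
  refine Finset.sum_congr rfl fun k _ => ?_
  rw [hstep k, resid_update_add, hda k, norm_sq_sub_norm_sq_sub_inner_div_smul]

theorem solvebak_residuals_telescope (obs vars : ℕ) (hobs : 0 < obs) (hvars : 0 < vars)
    (x : Matrix (Fin obs) (Fin vars) ℝ) (hcols : ∀ j, col x j ≠ 0)
    (y : Fin obs → ℝ)
    (a : ℕ → Fin vars → ℝ) (jseq : ℕ → Fin vars) (da : ℕ → ℝ)
    (hda : ∀ k, da k =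
      ⟪col x (jseq k), resid x y (a k)⟫ / ⟪col x (jseq k), col x (jseq k)⟫)
    (hstep : ∀ k, a (k + 1) = Function.update (a k) (jseq k) (a k (jseq k) + da k)) :
    ∀ K : ℕ, ‖resid x y (a 0)‖ ^ 2 - ‖resid x y (a K)‖ ^ 2 =
      ∑ k ∈ Finset.range K, da k ^ 2 * ‖col x (jseq k)‖ ^ 2 :=
  solvebak_residuals_telescope_general obs vars x y a jseq da hda hstep
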